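/- Let H be a finite-dimensional complex inner product space, ψ ∈ H a unit vector, and P₁, ..., P_L orthogonal projections on H with L ≥ 2. Then ∑_{i=2}^{L} ‖(I - P_i)(I - P_{i-1}⋯P₁) ψ‖² ≤ ∑_{i=1}^{L-1} ‖(I - P_i) ψ‖². -/
import Mathlib


open scoped InnerProductSpace

/-- `descComp P k = P k ∘ P (k-1) ∘ ⋯ ∘ P 1`, empty composition is the identity. -/
def descComp {H : Type*} [AddCommGroup H] [Module ℂ H]
    (P : ℕ → (H →ₗ[ℂ] H)) : ℕ → (H →ₗ[ℂ] H)
  | 0 => 1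
  | k + 1 => P (k + 1) ∘ₗ descComp P k

section Aux

variable {H : Type*} [NormedAddCommGroup H] [InnerProductSpace ℂ H]

lemma myorth {P : H →ₗ[ℂ] H} (hs : P.IsSymmetric) (hi : P ∘ₗ P = P) (x y : H) :
    ⟪(1 - P) x, P y⟫_ℂ = 0 := by
  have h2 : P (P y) = P y := congrFun (congrArg DFunLike.coe hi) y
  have h3 : ⟪P x, P y⟫_ℂ = ⟪x, P y⟫_ℂ := by rw [hs x (P y), h2]
  simp only [LinearMap.sub_apply, Module.End.one_apply, inner_sub_left, h3, sub_self]

lemma mypyth {P : H →ₗ[ℂ] H} (hs : P.IsSymmetric) (hi : P ∘ₗ P = P) (x y : H) :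
    ‖(1 - P) x + P y‖ ^ 2 = ‖(1 - P) x‖ ^ 2 + ‖P y‖ ^ 2 := by
  rw [@norm_add_sq ℂ, myorth hs hi]
  simp

/-- `(1 - Q_{k+1})ψ = (1 - P_{k+1})ψ + P_{k+1}((1 - Q_k)ψ)` -/
lemma mysplit (P : ℕ → (H →ₗ[ℂ] H)) (k : ℕ) (ψ : H) :
    (1 - descComp P (k + 1)) ψ
      = (1 - P (k + 1)) ψ + P (k + 1) ((1 - descComp P k) ψ) := by
  simp only [descComp, LinearMap.sub_apply, Module.End.one_apply, LinearMap.comp_apply,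
    map_sub]
  abel

lemma mysplitsq (P : ℕ → (H →ₗ[ℂ] H)) (k : ℕ) (ψ : H)
    (hs : (P (k+1)).IsSymmetric) (hi : P (k+1) ∘ₗ P (k+1) = P (k+1)) :
    ‖(1 - descComp P (k + 1)) ψ‖ ^ 2
      = ‖(1 - P (k + 1)) ψ‖ ^ 2 + ‖P (k + 1) ((1 - descComp P k) ψ)‖ ^ 2 := by
  rw [mysplit, mypyth hs hi]

lemma mykey (P : ℕ → (H →ₗ[ℂ] H)) (ψ : H) :
    ∀ L, 1 ≤ L → (∀ i ∈ Finset.Icc 1 L, (P i).IsSymmetric) →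
      (∀ i ∈ Finset.Icc 1 L, P i ∘ₗ P i = P i) →
    ∑ i ∈ Finset.Icc 2 L, ‖((1 - P i) ∘ₗ (1 - descComp P (i - 1))) ψ‖ ^ 2
      = ∑ i ∈ Finset.Icc 1 L, ‖(1 - P i) ψ‖ ^ 2 - ‖(1 - descComp P L) ψ‖ ^ 2 := by
  intro L hL1
  induction L, hL1 using Nat.le_induction with
  | base =>
    intro _ _
    simp [descComp]
  | succ L hL ih =>
    intro hs hi
    have hs' : ∀ i ∈ Finset.Icc 1 L, (P i).IsSymmetric := fun i h => hs i (by
      simp only [Finset.mem_Icc] at *; omega)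
    have hi' : ∀ i ∈ Finset.Icc 1 L, P i ∘ₗ P i = P i := fun i h => hi i (by
      simp only [Finset.mem_Icc] at *; omega)
    have hmem : L + 1 ∈ Finset.Icc 1 (L + 1) := by simp
    rw [Finset.sum_Icc_succ_top (by omega : 2 ≤ L + 1),
        Finset.sum_Icc_succ_top (by omega : 1 ≤ L + 1), ih hs' hi']
    have hsplit := mysplitsq P L ψ (hs _ hmem) (hi _ hmem)
    have hterm : ‖(1 - descComp P L) ψ‖ ^ 2
        = ‖((1 - P (L + 1)) ∘ₗ (1 - descComp P (L + 1 - 1))) ψ‖ ^ 2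
          + ‖P (L + 1) ((1 - descComp P L) ψ)‖ ^ 2 := by
      have := mypyth (hs _ hmem) (hi _ hmem) ((1 - descComp P L) ψ) ((1 - descComp P L) ψ)
      have hv : (1 - P (L+1)) ((1 - descComp P L) ψ) + P (L+1) ((1 - descComp P L) ψ)
          = (1 - descComp P L) ψ := by
        simp [LinearMap.sub_apply]
      rw [hv] at this
      simpa using this
    linarith

end Aux

theorem stmt3 {H : Type*} [NormedAddCommGroup H] [InnerProductSpace ℂ H]
    [FiniteDimensional ℂ H] (L : ℕ) (hL : 2 ≤ L) (P : ℕ → (H →ₗ[ℂ] H))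
    (hsym : ∀ i ∈ Finset.Icc 1 L, (P i).IsSymmetric)
    (hidem : ∀ i ∈ Finset.Icc 1 L, P i ∘ₗ P i = P i)
    (ψ : H) (hψ : ‖ψ‖ = 1) :
    ∑ i ∈ Finset.Icc 2 L, ‖((1 - P i) ∘ₗ (1 - descComp P (i - 1))) ψ‖ ^ 2
      ≤ ∑ i ∈ Finset.Icc 1 (L - 1), ‖(1 - P i) ψ‖ ^ 2 := by
  obtain ⟨K, rfl⟩ : ∃ K, L = K + 1 := ⟨L - 1, by omega⟩
  rw [mykey P ψ (K + 1) (by omega) hsym hidem]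
  have hmem : K + 1 ∈ Finset.Icc 1 (K + 1) := by simp
  have hle : ‖(1 - P (K + 1)) ψ‖ ^ 2 ≤ ‖(1 - descComp P (K + 1)) ψ‖ ^ 2 := by
    rw [mysplitsq P K ψ (hsym _ hmem) (hidem _ hmem)]
    have : (0:ℝ) ≤ ‖P (K + 1) ((1 - descComp P K) ψ)‖ ^ 2 := by positivity
    linarith
  rw [Finset.sum_Icc_succ_top (by omega : 1 ≤ K + 1)]
  simp only [Nat.add_sub_cancel]
  linarith
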